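/- Let (x_n) be a normalized block sequence in (c₀₀, ‖·‖_{JT_{2,p}}) admitting the ℓ_p-vector (c_i)_{i∈ℕ} with ∑_i c_i^p = 1 and associated branches (σ_i)_{i∈ℕ}. Then for every ε > 0 there exist an initial interval I₀ of ℕ and n₀ ∈ ℕ such that, setting B_{I₀} = ∪_{i∈I₀} σ_i, one has ‖x_n|_{ℕ∖B_{I₀}}‖ < ε for every n ≥ n₀. -/
import Mathlib


open Set Filter Topology

/-- `k` is an immediate successor of `n` in the order `le`. -/
def ImmSucc (le : ℕ → ℕ → Prop) (n k : ℕ) : Prop :=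
  le n k ∧ n ≠ k ∧ ∀ m, le n m → le m k → m = n ∨ m = k

/-- The tree `𝒯`: a partial order on `ℕ` compatible with the usual order, in which the set of
strict predecessors of every element is finite and linearly ordered, and every element has
infinitely many immediate successors. -/
structure IsJTTree (le : ℕ → ℕ → Prop) : Prop where
  refl : ∀ n, le n n
  antisymm : ∀ {m n}, le m n → le n m → m = n
  trans : ∀ {a b c}, le a b → le b c → le a c
  compat : ∀ {m n}, le m n → m ≤ n
  pred_finite : ∀ n, {m | le m n ∧ m ≠ n}.Finite
  pred_linear : ∀ n a b, le a n → le b n → le a b ∨ le b a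
  succ_infinite : ∀ n, {k | ImmSucc le n k}.Infinite

/-- A segment of the tree: a nonempty set of the form `{k : m ⪯ k ∧ k ⪯ n}`. -/
def IsSegment (le : ℕ → ℕ → Prop) (s : Set ℕ) : Prop :=
  ∃ m n, le m n ∧ s = {k | le m k ∧ le k n}

/-- A branch: a maximal linearly ordered subset of `ℕ`. -/
def IsBranch (le : ℕ → ℕ → Prop) (σ : Set ℕ) : Prop :=
  IsChain le σ ∧ ∀ τ, IsChain le τ → σ ⊆ τ → σ = τ

/-- `‖x‖_s = (∑_{i ∈ s} x(i)²)^(1/2)`. -/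
noncomputable def segNorm (x : ℕ → ℝ) (s : Set ℕ) : ℝ :=
  Real.sqrt (∑' i, s.indicator (fun j => (x j) ^ 2) i)

/-- The `JT_{2,p}` norm on finitely supported sequences:
`‖x‖ = sup {(∑_k ‖x‖_{s_k}^p)^(1/p) : s₁,…,s_n pairwise disjoint segments}`. -/
noncomputable def jtNorm (le : ℕ → ℕ → Prop) (p : ℝ) (x : ℕ → ℝ) : ℝ :=
  sSup { r : ℝ | ∃ (n : ℕ) (s : Fin n → Set ℕ),
    (∀ k, IsSegment le (s k)) ∧
    (∀ k l, k ≠ l → Disjoint (s k) (s l)) ∧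
    r = (∑ k : Fin n, segNorm x (s k) ^ p) ^ (1 / p) }

/-- A block sequence of finitely supported vectors. -/
def IsBlockSeq (x : ℕ → ℕ → ℝ) : Prop :=
  (∀ n, (Function.support (x n)).Finite) ∧
  ∀ n i j, x n i ≠ 0 → x (n + 1) j ≠ 0 → i < j

/-- The final segment `σ_{>l} = {k ∈ σ : k > l}`. -/
def finalSeg (σ : Set ℕ) (l : ℕ) : Set ℕ := {k ∈ σ | l < k}

/-- Two final segments are incomparable when their least elements are `le`-incomparable. -/
def IncompFinal (le : ℕ → ℕ → Prop) (A B : Set ℕ) : Prop :=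
  A.Nonempty ∧ B.Nonempty ∧ ¬ le (sInf A) (sInf B) ∧ ¬ le (sInf B) (sInf A)

/-- The sequence `(x n)` admits the `ℓ_p`-vector `(c i)_{i ∈ N}` with associated branches
`(σ i)_{i ∈ N}`, where `N` is an initial interval of `ℕ` or all of `ℕ`. -/
def AdmitsLpVector (le : ℕ → ℕ → Prop) (p : ℝ) (x : ℕ → ℕ → ℝ)
    (N : Set ℕ) (c : ℕ → ℝ) (σ : ℕ → Set ℕ) : Prop :=
  (∀ i j, i ≤ j → j ∈ N → i ∈ N) ∧
  (∀ i ∈ N, IsBranch le (σ i)) ∧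
  (∀ i ∈ N, ∀ j ∈ N, i ≠ j → σ i ≠ σ j) ∧
  (∀ i ∈ N, ∀ j ∈ N, i ≤ j → c j ≤ c i) ∧
  (∑' i : N, c i.1 ^ p) ≤ 1 ∧
  (∀ i ∈ N, 0 < c i ∧
    Tendsto (fun n => jtNorm le p ((σ i).indicator (x n))) atTop (nhds (c i))) ∧
  (∀ τ, IsBranch le τ → (∀ i ∈ N, τ ≠ σ i) →
    Tendsto (fun n => jtNorm le p (τ.indicator (x n))) atTop (nhds 0))

section Helpers

variable {x : ℕ → ℝ}

lemma segNorm_nonneg (x : ℕ → ℝ) (s : Set ℕ) : 0 ≤ segNorm x s := Real.sqrt_nonneg _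

lemma segNorm_congr {s t : Set ℕ} (h : ∀ i, x i ≠ 0 → (i ∈ s ↔ i ∈ t)) :
    segNorm x s = segNorm x t := by
  unfold segNorm
  congr 1
  refine tsum_congr fun i => ?_
  by_cases hx : x i = 0
  · by_cases hs : i ∈ s <;> by_cases ht : i ∈ t <;>
      simp [Set.indicator_of_mem, Set.indicator_of_notMem, hs, ht, hx]
  · by_cases hs : i ∈ s
    · rw [Set.indicator_of_mem hs, Set.indicator_of_mem ((h i hx).1 hs)]
    · rw [Set.indicator_of_notMem hs, Set.indicator_of_notMem (fun hmem => hs ((h i hx).2 hmem))]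

lemma segNorm_eq_sum (hx : (Function.support x).Finite) (s : Set ℕ) :
    segNorm x s = Real.sqrt (∑ i ∈ hx.toFinset, s.indicator (fun j => (x j) ^ 2) i) := by
  unfold segNorm
  congr 1
  refine tsum_eq_sum fun i hi => ?_
  have : x i = 0 := by
    by_contra h
    exact hi (hx.mem_toFinset.2 h)
  by_cases hs : i ∈ s <;>
    simp [Set.indicator_of_mem, Set.indicator_of_notMem, hs, this]

lemma segNorm_sq (hx : (Function.support x).Finite) (s : Set ℕ) :
    segNorm x s ^ (2:ℕ) = ∑ i ∈ hx.toFinset, s.indicator (fun j => (x j) ^ 2) i := by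
  rw [segNorm_eq_sum hx s, Real.sq_sqrt]
  exact Finset.sum_nonneg fun i _ => Set.indicator_nonneg (fun j _ => sq_nonneg _) _

lemma sum_segNorm_sq_le (hx : (Function.support x).Finite) {n : ℕ} (s : Fin n → Set ℕ)
    (hdisj : ∀ k l, k ≠ l → Disjoint (s k) (s l)) :
    ∑ k : Fin n, segNorm x (s k) ^ (2:ℕ) ≤ ∑ i ∈ hx.toFinset, (x i) ^ 2 := by
  calc ∑ k : Fin n, segNorm x (s k) ^ (2:ℕ)
      = ∑ k : Fin n, ∑ i ∈ hx.toFinset, (s k).indicator (fun j => (x j) ^ 2) i := by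
        exact Finset.sum_congr rfl fun k _ => segNorm_sq hx (s k)
    _ = ∑ i ∈ hx.toFinset, ∑ k : Fin n, (s k).indicator (fun j => (x j) ^ 2) i :=
        Finset.sum_comm
    _ ≤ ∑ i ∈ hx.toFinset, (x i) ^ 2 := by
        refine Finset.sum_le_sum fun i _ => ?_
        by_cases h : ∃ k, i ∈ s k
        · obtain ⟨k₀, hk₀⟩ := h
          rw [Finset.sum_eq_single k₀]
          · rw [Set.indicator_of_mem hk₀]
          · intro k _ hk
            refine Set.indicator_of_notMem (fun hmem => ?_) _
            exact (hdisj k k₀ hk).le_bot ⟨hmem, hk₀⟩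
          · intro h; exact absurd (Finset.mem_univ k₀) h
        · push_neg at h
          rw [Finset.sum_eq_zero fun k _ => Set.indicator_of_notMem (h k) _]
          exact sq_nonneg _

end Helpers
section Helpers2

/-- For `p ≥ 2`, `(∑ a_k^p)^(1/p) ≤ M` whenever `∑ a_k² ≤ M²`. -/
lemma rpow_sum_le {p : ℝ} (hp : 2 < p) {n : ℕ} {a : Fin n → ℝ} (ha : ∀ k, 0 ≤ a k)
    {M : ℝ} (hM : 0 ≤ M) (h : ∑ k, a k ^ (2:ℕ) ≤ M ^ (2:ℕ)) :
    (∑ k, a k ^ p) ^ (1/p) ≤ M := by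
  have hp0 : (0:ℝ) < p := by linarith
  have key : ∑ k, a k ^ p ≤ M ^ p := by
    have haM : ∀ k, a k ≤ M := by
      intro k
      have h1 : a k ^ (2:ℕ) ≤ M ^ (2:ℕ) := by
        refine le_trans ?_ h
        exact Finset.single_le_sum (fun l _ => sq_nonneg (a l)) (Finset.mem_univ k)
      nlinarith [ha k, sq_nonneg (a k - M), sq_nonneg (a k + M)]
    have step : ∀ k, a k ^ p ≤ M ^ (p - 2) * a k ^ (2:ℕ) := by
      intro k
      rcases eq_or_lt_of_le (ha k) with h0 | h0
      · rw [← h0, Real.zero_rpow (ne_of_gt hp0)]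
        positivity
      · have : a k ^ p = a k ^ (p-2) * a k ^ (2:ℕ) := by
          rw [← Real.rpow_natCast (a k) 2, ← Real.rpow_add h0]
          norm_num
        rw [this]
        exact mul_le_mul_of_nonneg_right
          (Real.rpow_le_rpow (le_of_lt h0) (haM k) (by linarith)) (sq_nonneg _)
    calc ∑ k, a k ^ p ≤ ∑ k, M ^ (p - 2) * a k ^ (2:ℕ) := Finset.sum_le_sum fun k _ => step k
      _ = M ^ (p-2) * ∑ k, a k ^ (2:ℕ) := by rw [Finset.mul_sum]
      _ ≤ M ^ (p-2) * M ^ (2:ℕ) := by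
          refine mul_le_mul_of_nonneg_left h (Real.rpow_nonneg hM _)
      _ = M ^ p := by
          rw [← Real.rpow_natCast M 2, ← Real.rpow_add' hM]
          · norm_num
          · norm_num; linarith
  calc (∑ k, a k ^ p) ^ (1/p) ≤ (M ^ p) ^ (1/p) := by
        refine Real.rpow_le_rpow ?_ key (by positivity)
        exact Finset.sum_nonneg fun k _ => Real.rpow_nonneg (ha k) p
    _ = M := by rw [one_div, Real.rpow_rpow_inv hM (ne_of_gt hp0)]

end Helpers2
section Helpers3

variable {le : ℕ → ℕ → Prop} {p : ℝ} {x : ℕ → ℝ}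

/-- The defining set of `jtNorm`. -/
def jtSet (le : ℕ → ℕ → Prop) (p : ℝ) (x : ℕ → ℝ) : Set ℝ :=
  { r : ℝ | ∃ (n : ℕ) (s : Fin n → Set ℕ),
    (∀ k, IsSegment le (s k)) ∧
    (∀ k l, k ≠ l → Disjoint (s k) (s l)) ∧
    r = (∑ k : Fin n, segNorm x (s k) ^ p) ^ (1 / p) }

lemma jtNorm_eq_sSup : jtNorm le p x = sSup (jtSet le p x) := rfl

lemma zero_mem_jtSet (hp : 2 < p) : (0:ℝ) ∈ jtSet le p x := by
  refine ⟨0, Fin.elim0, fun k => k.elim0, fun k _ _ => k.elim0, ?_⟩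
  rw [Finset.univ_eq_empty, Finset.sum_empty, Real.zero_rpow]
  positivity

lemma mem_jtSet_le (hp : 2 < p) (hx : (Function.support x).Finite)
    {r : ℝ} (hr : r ∈ jtSet le p x) : r ≤ segNorm x Set.univ := by
  obtain ⟨n, s, _, hdisj, rfl⟩ := hr
  refine rpow_sum_le hp (fun k => segNorm_nonneg x (s k)) (segNorm_nonneg x _) ?_
  calc ∑ k, segNorm x (s k) ^ (2:ℕ) ≤ ∑ i ∈ hx.toFinset, (x i) ^ 2 :=
        sum_segNorm_sq_le hx s hdisj
    _ = segNorm x Set.univ ^ (2:ℕ) := by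
        rw [segNorm_sq hx Set.univ]
        simp

lemma bddAbove_jtSet (hp : 2 < p) (hx : (Function.support x).Finite) :
    BddAbove (jtSet le p x) :=
  ⟨segNorm x Set.univ, fun _ hr => mem_jtSet_le hp hx hr⟩

lemma le_jtNorm (hp : 2 < p) (hx : (Function.support x).Finite)
    {r : ℝ} (hr : r ∈ jtSet le p x) : r ≤ jtNorm le p x :=
  le_csSup (bddAbove_jtSet hp hx) hr

lemma jtNorm_nonneg (hp : 2 < p) (hx : (Function.support x).Finite) :
    0 ≤ jtNorm le p x :=
  le_jtNorm hp hx (zero_mem_jtSet hp)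

lemma jtNorm_le (hp : 2 < p) {M : ℝ} (hM : 0 ≤ M)
    (h : ∀ r ∈ jtSet le p x, r ≤ M) : jtNorm le p x ≤ M :=
  Real.sSup_le h hM

lemma jtNorm_le_segNorm_univ (hp : 2 < p) (hx : (Function.support x).Finite) :
    jtNorm le p x ≤ segNorm x Set.univ :=
  jtNorm_le hp (segNorm_nonneg x _) (fun _ hr => mem_jtSet_le hp hx hr)

lemma segNorm_le_jtNorm (hp : 2 < p) (hx : (Function.support x).Finite)
    {s : Set ℕ} (hs : IsSegment le s) : segNorm x s ≤ jtNorm le p x := by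
  have hp0 : (0:ℝ) < p := by linarith
  refine le_of_eq_of_le ?_ (le_jtNorm hp hx
    ⟨1, fun _ => s, fun _ => hs, fun k l hkl => absurd (Subsingleton.elim k l) hkl, rfl⟩)
  rw [Finset.sum_const, Finset.card_univ, Fintype.card_fin, one_smul, one_div,
    Real.rpow_rpow_inv (segNorm_nonneg x s) (ne_of_gt hp0)]

end Helpers3
section Helpers4

variable {le : ℕ → ℕ → Prop}

lemma branch_comparable {σ : Set ℕ} (hT : IsJTTree le) (hσ : IsBranch le σ)
    {a b : ℕ} (ha : a ∈ σ) (hb : b ∈ σ) : le a b ∨ le b a := by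
  rcases eq_or_ne a b with rfl | hne
  · exact Or.inl (hT.refl a)
  · exact hσ.1 ha hb hne

lemma branch_downward {σ : Set ℕ} (hT : IsJTTree le) (hσ : IsBranch le σ)
    {a b : ℕ} (hab : le a b) (hb : b ∈ σ) : a ∈ σ := by
  have hchain : IsChain le (insert a σ) := by
    refine hσ.1.insert fun c hc _ => ?_
    rcases branch_comparable hT hσ hb hc with h | h
    · exact Or.inl (hT.trans hab h)
    · rcases hT.pred_linear b a c hab h with h' | h'
      · exact Or.inl h'
      · exact Or.inr h'
  have := hσ.2 _ hchain (Set.subset_insert a σ)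
  rw [this]
  exact Set.mem_insert a σ

lemma branch_exists_ge {σ : Set ℕ} (hT : IsJTTree le) (hσ : IsBranch le σ) (N : ℕ) :
    ∃ k ∈ σ, N ≤ k := by
  by_contra hcon
  push_neg at hcon
  -- σ is nonempty
  have hne : σ.Nonempty := by
    by_contra hemp
    rw [Set.not_nonempty_iff_eq_empty] at hemp
    have := hσ.2 {0} (Set.subsingleton_singleton.isChain) (by rw [hemp]; exact Set.empty_subset _)
    rw [hemp] at this
    exact (Set.singleton_ne_empty 0) this.symm
  have hfin : σ.Finite := (Set.finite_Iio N).subset fun k hk => hcon k hk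
  -- take the ℕ-maximum
  obtain ⟨a, haσ, hmax⟩ := Set.exists_max_image σ id hfin hne
  have hba : ∀ b ∈ σ, le b a := by
    intro b hb
    rcases branch_comparable hT hσ hb haσ with h | h
    · exact h
    · have : a = b := Nat.le_antisymm (hT.compat h) (hmax b hb)
      rw [← this]; exact hT.refl a
  obtain ⟨k, hk⟩ := (hT.succ_infinite a).nonempty
  have hkσ : k ∉ σ := by
    intro hkmem
    exact hk.2.1 (Nat.le_antisymm (hT.compat hk.1) (hmax k hkmem))
  have hchain : IsChain le (insert k σ) := by
    refine hσ.1.insert fun c hc _ => Or.inr (hT.trans (hba c hc) hk.1)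
  have := hσ.2 _ hchain (Set.subset_insert k σ)
  exact hkσ (this ▸ Set.mem_insert k σ)

lemma branches_inter_finite {σ τ : Set ℕ} (hT : IsJTTree le) (hσ : IsBranch le σ)
    (hτ : IsBranch le τ) (hne : σ ≠ τ) : (σ ∩ τ).Finite := by
  have hnsub : ¬ σ ⊆ τ := fun hsub => hne (hσ.2 τ hτ.1 hsub)
  obtain ⟨a, haσ, haτ⟩ := Set.not_subset.1 hnsub
  refine (hT.pred_finite a).subset fun b hb => ?_
  have hba : b ≠ a := fun h => haτ (h ▸ hb.2)
  rcases branch_comparable hT hσ hb.1 haσ with h | h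
  · exact ⟨h, hba⟩
  · exact absurd (branch_downward hT hτ h hb.2) haτ

/-- The ℕ-least element of a pairwise `le`-comparable set is its `le`-least element. -/
lemma sInf_le_least (hT : IsJTTree le) {S : Set ℕ} (hS : S.Nonempty)
    (hcomp : ∀ u ∈ S, ∀ v ∈ S, le u v ∨ le v u) :
    sInf S ∈ S ∧ ∀ k ∈ S, le (sInf S) k := by
  have hmem := Nat.sInf_mem hS
  refine ⟨hmem, fun k hk => ?_⟩
  rcases hcomp _ hmem _ hk with h | h
  · exact h
  · have : k = sInf S := Nat.le_antisymm (hT.compat h) (Nat.sInf_le hk)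
    rw [← this]; exact hT.refl k

/-- A segment minus a downward-closed set is a segment (if nonempty). -/
lemma isSegment_diff (hT : IsJTTree le) {s B : Set ℕ} (hs : IsSegment le s)
    (hB : ∀ a b, le a b → b ∈ B → a ∈ B) (hne : (s \ B).Nonempty) :
    IsSegment le (s \ B) := by
  obtain ⟨a, b, hab, rfl⟩ := hs
  have hcomp : ∀ u ∈ {k | le a k ∧ le k b} \ B, ∀ v ∈ {k | le a k ∧ le k b} \ B,
      le u v ∨ le v u := fun u hu v hv => hT.pred_linear b u v hu.1.2 hv.1.2
  obtain ⟨hmem, hleast⟩ := sInf_le_least hT hne hcomp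
  set m := sInf ({k | le a k ∧ le k b} \ B)
  refine ⟨m, b, hmem.1.2, ?_⟩
  ext k
  constructor
  · intro hk
    exact ⟨hleast k hk, hk.1.2⟩
  · rintro ⟨hmk, hkb⟩
    refine ⟨⟨hT.trans hmem.1.1 hmk, hkb⟩, fun hkB => hmem.2 (hB m k hmk hkB)⟩

end Helpers4
section Helpers5

variable {le : ℕ → ℕ → Prop} {p : ℝ} {x : ℕ → ℝ}

lemma segNorm_indicator (x : ℕ → ℝ) (A s : Set ℕ) :
    segNorm (A.indicator x) s = segNorm x (s ∩ A) := by
  unfold segNorm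
  congr 1
  refine tsum_congr fun i => ?_
  by_cases hi : i ∈ s <;> by_cases hia : i ∈ A <;>
    simp [Set.indicator_apply, hi, hia]

lemma segNorm_empty (x : ℕ → ℝ) : segNorm x ∅ = 0 := by
  simp [segNorm]

lemma sum_rpow_le_jtNorm_rpow (hp : 2 < p) (hx : (Function.support x).Finite)
    {ι : Type} [Fintype ι] (u : ι → Set ℕ)
    (hseg : ∀ k, IsSegment le (u k))
    (hdisj : ∀ k l, k ≠ l → Disjoint (u k) (u l)) :
    ∑ k : ι, segNorm x (u k) ^ p ≤ jtNorm le p x ^ p := by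
  have hp0 : (0:ℝ) < p := by linarith
  set e : Fin (Fintype.card ι) ≃ ι := (Fintype.equivFin ι).symm
  have hsum_nonneg : (0:ℝ) ≤ ∑ k : Fin (Fintype.card ι), segNorm x (u (e k)) ^ p :=
    Finset.sum_nonneg fun k _ => Real.rpow_nonneg (segNorm_nonneg _ _) _
  have hmem : (∑ k : Fin (Fintype.card ι), segNorm x (u (e k)) ^ p) ^ (1/p)
      ∈ jtSet le p x := by
    refine ⟨Fintype.card ι, fun k => u (e k), fun k => hseg (e k), ?_, rfl⟩
    intro k l hkl
    exact hdisj (e k) (e l) (fun h => hkl (e.injective h))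
  have hle := le_jtNorm hp hx hmem
  have heq : ∑ k : ι, segNorm x (u k) ^ p
      = ∑ k : Fin (Fintype.card ι), segNorm x (u (e k)) ^ p :=
    (Equiv.sum_comp e (fun i => segNorm x (u i) ^ p)).symm
  rw [heq]
  calc ∑ k : Fin (Fintype.card ι), segNorm x (u (e k)) ^ p
      = (((∑ k : Fin (Fintype.card ι), segNorm x (u (e k)) ^ p) ^ (1/p))) ^ p := by
        rw [one_div, Real.rpow_inv_rpow hsum_nonneg (ne_of_gt hp0)]
    _ ≤ jtNorm le p x ^ p :=
        Real.rpow_le_rpow (Real.rpow_nonneg hsum_nonneg _) hle (le_of_lt hp0)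

end Helpers5
section MainBound

variable {le : ℕ → ℕ → Prop} {p : ℝ}

lemma main_bound (hT : IsJTTree le) (hp : 2 < p)
    {x : ℕ → ℝ} (hx : (Function.support x).Finite)
    (hn1 : jtNorm le p x = 1) (σ : ℕ → Set ℕ) (m₀ : ℕ)
    (hbr : ∀ i, i < m₀ → IsBranch le (σ i))
    (hdist : ∀ i j, i < m₀ → j < m₀ → i ≠ j → σ i ≠ σ j)
    (hsupp : ∀ k, x k ≠ 0 → ∀ i j, i < m₀ → j < m₀ → i ≠ j → ¬(k ∈ σ i ∧ k ∈ σ j)) :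
    jtNorm le p ((⋃ i ∈ Finset.range m₀, σ i)ᶜ.indicator x) ^ p
      ≤ 1 - ∑ i ∈ Finset.range m₀, segNorm x (σ i) ^ p := by
  classical
  have hp0 : (0:ℝ) < p := by linarith
  set B := ⋃ i ∈ Finset.range m₀, σ i with hBdef
  have hσB : ∀ i : Fin m₀, σ i ⊆ B := by
    intro i k hk
    exact Set.mem_biUnion (Finset.mem_range.2 i.2) hk
  have hBdc : ∀ a b, le a b → b ∈ B → a ∈ B := by
    intro a b hab hb
    rw [hBdef, Set.mem_iUnion₂] at hb ⊢
    obtain ⟨i, hi, hbi⟩ := hb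
    exact ⟨i, hi, branch_downward hT (hbr i (Finset.mem_range.1 hi)) hab hbi⟩
  -- the finite set of pairwise intersections
  set F := ⋃ (q : Fin m₀ × Fin m₀), (if q.1 ≠ q.2 then σ q.1 ∩ σ q.2 else ∅) with hFdef
  have hFfin : F.Finite := by
    refine Set.finite_iUnion fun q => ?_
    by_cases h : q.1 ≠ q.2
    · rw [if_pos h]
      exact branches_inter_finite hT (hbr _ q.1.2) (hbr _ q.2.2)
        (hdist _ _ q.1.2 q.2.2 (fun hv => h (Fin.val_injective hv)))
    · rw [if_neg h]; exact Set.finite_empty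
  have hFsub : ∀ i j : Fin m₀, i ≠ j → σ i ∩ σ j ⊆ F := by
    intro i j hij k hk
    rw [hFdef]
    refine Set.mem_iUnion.2 ⟨(i, j), ?_⟩
    rw [if_pos (by simpa using hij)]
    exact hk
  have hsuppF : ∀ k, x k ≠ 0 → k ∉ F := by
    intro k hk hkF
    rw [hFdef, Set.mem_iUnion] at hkF
    obtain ⟨q, hq⟩ := hkF
    by_cases h : q.1 ≠ q.2
    · rw [if_pos h] at hq
      exact hsupp k hk q.1 q.2 q.1.2 q.2.2 (fun hv => h (Fin.ext hv))
        ⟨hq.1, hq.2⟩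
    · rw [if_neg h] at hq
      exact hq
  set L := hFfin.toFinset.sup id with hLdef
  have hL : ∀ k ∈ F, k ≤ L := fun k hk => Finset.le_sup (f := id) (hFfin.mem_toFinset.2 hk)
  set M := hx.toFinset.sup id with hMdef
  have hM : ∀ k, x k ≠ 0 → k ≤ M := fun k hk =>
    Finset.le_sup (f := id) (hx.mem_toFinset.2 hk)
  -- least elements above the intersections
  have hSne : ∀ i : Fin m₀, ((σ i) \ F).Nonempty := by
    intro i
    obtain ⟨k, hk, hkL⟩ := branch_exists_ge hT (hbr i i.2) (L + 1)
    exact ⟨k, hk, fun hkF => by have := hL k hkF; omega⟩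
  set mfun : Fin m₀ → ℕ := fun i => sInf (σ i \ F) with hmfun
  have hm : ∀ i : Fin m₀, mfun i ∈ σ i ∧ mfun i ∉ F ∧ ∀ k ∈ σ i \ F, le (mfun i) k := by
    intro i
    obtain ⟨hmem, hleast⟩ := sInf_le_least hT (hSne i)
      (fun u hu v hv => branch_comparable hT (hbr i i.2) hu.1 hv.1)
    exact ⟨hmem.1, hmem.2, hleast⟩
  have hnex : ∀ i : Fin m₀, ∃ nv, nv ∈ σ i ∧ max M (mfun i) + 1 ≤ nv := by
    intro i
    obtain ⟨k, hk, hge⟩ := branch_exists_ge hT (hbr i i.2) (max M (mfun i) + 1)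
    exact ⟨k, hk, hge⟩
  choose nfun hnmem hnge using hnex
  have hmn : ∀ i : Fin m₀, le (mfun i) (nfun i) := by
    intro i
    rcases branch_comparable hT (hbr i i.2) (hm i).1 (hnmem i) with h | h
    · exact h
    · have := hT.compat h
      have := hnge i
      have : nfun i = mfun i := by omega
      rw [this]; exact hT.refl _
  set t : Fin m₀ → Set ℕ := fun i => {k | le (mfun i) k ∧ le k (nfun i)} with htdef
  have hseg_t : ∀ i, IsSegment le (t i) := fun i => ⟨mfun i, nfun i, hmn i, rfl⟩
  have ht_sub : ∀ i, t i ⊆ σ i := fun i k hk =>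
    branch_downward hT (hbr i i.2) hk.2 (hnmem i)
  have ht_F : ∀ i : Fin m₀, ∀ k ∈ t i, k ∉ F := by
    intro i k hk hkF
    rw [hFdef, Set.mem_iUnion] at hkF
    obtain ⟨q, hq⟩ := hkF
    by_cases h : q.1 ≠ q.2
    · rw [if_pos h] at hq
      -- pick j ≠ i with k ∈ σ j
      obtain ⟨j, hji, hkj⟩ : ∃ j : Fin m₀, j ≠ i ∧ k ∈ σ j := by
        by_cases h1 : q.1 = i
        · exact ⟨q.2, fun h2 => h (h1 ▸ h2 ▸ rfl), hq.2⟩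
        · exact ⟨q.1, h1, hq.1⟩
      have hmj : mfun i ∈ σ j := branch_downward hT (hbr j j.2) hk.1 hkj
      exact (hm i).2.1 (hFsub i j (fun h' => hji (h' ▸ rfl)) ⟨(hm i).1, hmj⟩)
    · rw [if_neg h] at hq
      exact hq
  have ht_disj : ∀ i j : Fin m₀, i ≠ j → Disjoint (t i) (t j) := by
    intro i j hij
    rw [Set.disjoint_left]
    intro k hki hkj
    exact ht_F i k hki (hFsub i j hij ⟨ht_sub i hki, ht_sub j hkj⟩)
  have htrace : ∀ i : Fin m₀, segNorm x (t i) = segNorm x (σ i) := by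
    intro i
    refine segNorm_congr fun k hk => ⟨fun h => ht_sub i h, fun h => ?_⟩
    have hkF : k ∉ F := hsuppF k hk
    refine ⟨(hm i).2.2 k ⟨h, hkF⟩, ?_⟩
    rcases branch_comparable hT (hbr i i.2) h (hnmem i) with h' | h'
    · exact h'
    · have h1 := hT.compat h'
      have h2 := hM k hk
      have h3 := hnge i
      have : k = nfun i := by omega
      rw [this]; exact hT.refl _
  -- the sum over the first m₀ branches is at most 1
  have hsum_eq : ∑ i ∈ Finset.range m₀, segNorm x (σ i) ^ p
      = ∑ i : Fin m₀, segNorm x (t i) ^ p := by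
    rw [← Fin.sum_univ_eq_sum_range (fun i => segNorm x (σ i) ^ p) m₀]
    exact Finset.sum_congr rfl fun i _ => by rw [htrace i]
  have hS_le_one : ∑ i ∈ Finset.range m₀, segNorm x (σ i) ^ p ≤ 1 := by
    rw [hsum_eq]
    calc ∑ i : Fin m₀, segNorm x (t i) ^ p ≤ jtNorm le p x ^ p :=
          sum_rpow_le_jtNorm_rpow hp hx t hseg_t ht_disj
      _ = 1 := by rw [hn1, Real.one_rpow]
  set S := ∑ i ∈ Finset.range m₀, segNorm x (σ i) ^ p with hSdef
  have hS_nonneg : 0 ≤ S :=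
    Finset.sum_nonneg fun i _ => Real.rpow_nonneg (segNorm_nonneg _ _) _
  -- the main estimate on the norm of the restriction
  have hbound : jtNorm le p (Bᶜ.indicator x) ≤ (1 - S) ^ (1/p) := by
    refine jtNorm_le hp (Real.rpow_nonneg (by linarith) _) ?_
    rintro r ⟨nn, s, hseg, hdisj, rfl⟩
    set s' : Fin nn → Set ℕ := fun k => s k \ B with hs'def
    have hsegnorm : ∀ k, segNorm (Bᶜ.indicator x) (s k) = segNorm x (s' k) := by
      intro k
      rw [segNorm_indicator x Bᶜ (s k)]
      rfl
    -- combined configuration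
    set u : (Fin m₀ ⊕ {k : Fin nn // (s' k).Nonempty}) → Set ℕ :=
      Sum.elim t (fun k => s' k.1) with hudef
    have hseg_u : ∀ k, IsSegment le (u k) := by
      rintro (i | ⟨k, hk⟩)
      · exact hseg_t i
      · exact isSegment_diff hT (hseg k) hBdc hk
    have hdisj_u : ∀ k l, k ≠ l → Disjoint (u k) (u l) := by
      have hleft : ∀ (i : Fin m₀) (l : {k : Fin nn // (s' k).Nonempty}),
          Disjoint (t i) (s' l.1) := by
        intro i l
        exact disjoint_compl_right.mono ((ht_sub i).trans (hσB i))
          (fun a ha => ha.2)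
      rintro (i | ⟨k, hk⟩) (j | ⟨l, hl⟩) hne
      · exact ht_disj i j (fun h => hne (h ▸ rfl))
      · exact hleft i ⟨l, hl⟩
      · exact (hleft j ⟨k, hk⟩).symm
      · refine (hdisj k l (fun h => hne ?_)).mono Set.diff_subset Set.diff_subset
        subst h; rfl
    have key := sum_rpow_le_jtNorm_rpow hp hx u hseg_u hdisj_u
    rw [hn1, Real.one_rpow, Fintype.sum_sum_type] at key
    have hsub_eq : ∑ k : {k : Fin nn // (s' k).Nonempty}, segNorm x (s' k.1) ^ p
        = ∑ k : Fin nn, segNorm x (s' k) ^ p := by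
      rw [← Finset.sum_subtype (Finset.univ.filter (fun k => (s' k).Nonempty))
        (fun k => by simp) (fun k => segNorm x (s' k) ^ p)]
      refine Finset.sum_filter_of_ne fun k _ h => ?_
      by_contra hne
      rw [Set.not_nonempty_iff_eq_empty] at hne
      rw [hne, segNorm_empty, Real.zero_rpow (ne_of_gt hp0)] at h
      exact h rfl
    have hkey2 : S + ∑ k : Fin nn, segNorm x (s' k) ^ p ≤ 1 := by
      calc S + ∑ k : Fin nn, segNorm x (s' k) ^ p
          = (∑ i : Fin m₀, segNorm x (Sum.elim t (fun k : {k : Fin nn // (s' k).Nonempty} => s' k.1) (Sum.inl i)) ^ p)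
            + ∑ k : {k : Fin nn // (s' k).Nonempty}, segNorm x (s' k.1) ^ p := by
            rw [hsub_eq]
            simp only [Sum.elim_inl]
            rw [hsum_eq]
        _ ≤ 1 := key
    have hr_eq : (∑ k : Fin nn, segNorm (Bᶜ.indicator x) (s k) ^ p)
        = ∑ k : Fin nn, segNorm x (s' k) ^ p :=
      Finset.sum_congr rfl fun k _ => by rw [hsegnorm k]
    rw [hr_eq]
    exact Real.rpow_le_rpow
      (Finset.sum_nonneg fun k _ => Real.rpow_nonneg (segNorm_nonneg _ _) _)
      (by linarith) (by positivity)
  calc jtNorm le p (Bᶜ.indicator x) ^ p ≤ ((1 - S) ^ (1/p)) ^ p := by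
        refine Real.rpow_le_rpow ?_ hbound (le_of_lt hp0)
        refine jtNorm_nonneg hp (hx.subset ?_)
        rw [Set.support_indicator]
        exact Set.inter_subset_right
    _ = 1 - S := by
        rw [one_div, Real.rpow_inv_rpow (by linarith) (ne_of_gt hp0)]

end MainBound
theorem stmt10 (le : ℕ → ℕ → Prop) (hT : IsJTTree le) (p : ℝ) (hp : 2 < p)
    (x : ℕ → ℕ → ℝ) (hblock : IsBlockSeq x)
    (hnorm : ∀ n, jtNorm le p (x n) = 1)
    (c : ℕ → ℝ) (σ : ℕ → Set ℕ)
    (hvec : AdmitsLpVector le p x Set.univ c σ)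
    (hc1 : (∑' i : ℕ, c i ^ p) = 1)
    (ε : ℝ) (hε : 0 < ε) :
    ∃ (m₀ n₀ : ℕ), ∀ n, n₀ ≤ n →
      jtNorm le p ((⋃ i ∈ Finset.range m₀, σ i)ᶜ.indicator (x n)) < ε := by
  classical
  obtain ⟨-, hbr0, hdist0, -, -, hpos0, -⟩ := hvec
  have hbr : ∀ i : ℕ, IsBranch le (σ i) := fun i => hbr0 i (Set.mem_univ i)
  have hdist : ∀ i j : ℕ, i ≠ j → σ i ≠ σ j := fun i j hij =>
    hdist0 i (Set.mem_univ i) j (Set.mem_univ j) hij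
  have htend : ∀ i : ℕ, Tendsto (fun n => jtNorm le p ((σ i).indicator (x n)))
      atTop (nhds (c i)) := fun i => (hpos0 i (Set.mem_univ i)).2
  have hp0 : (0:ℝ) < p := by linarith
  have hεp : (0:ℝ) < ε ^ p := Real.rpow_pos_of_pos hε p
  -- choose m₀
  have hsumm : Summable (fun i => c i ^ p) := by
    by_contra h
    rw [tsum_eq_zero_of_not_summable h] at hc1
    norm_num at hc1
  have htendsum : Tendsto (fun m => ∑ i ∈ Finset.range m, c i ^ p) atTop (nhds 1) := by
    have h1 := hsumm.hasSum
    rw [hc1] at h1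
    exact h1.tendsto_sum_nat
  obtain ⟨m₀, hm₀⟩ :=
    (htendsum.eventually (eventually_gt_nhds (by linarith : 1 - ε ^ p / 2 < 1))).exists
  set η : ℝ := ε ^ p / (2 * (m₀ + 1)) with hηdef
  have hη : 0 < η := by positivity
  -- choose n₁ from the tendsto conditions
  have hev1 : ∀ᶠ n in atTop, ∀ i ∈ Finset.range m₀,
      c i ^ p - η < jtNorm le p ((σ i).indicator (x n)) ^ p := by
    rw [Filter.eventually_all_finset]
    intro i _
    have h1 : Tendsto (fun n => jtNorm le p ((σ i).indicator (x n)) ^ p)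
        atTop (nhds (c i ^ p)) := (htend i).rpow_const (Or.inr (le_of_lt hp0))
    exact h1.eventually (eventually_gt_nhds (by linarith : c i ^ p - η < c i ^ p))
  obtain ⟨n₁, hn₁⟩ := Filter.eventually_atTop.1 hev1
  -- support lower bounds
  have hsne : ∀ n, (Function.support (x n)).Nonempty := by
    intro n
    by_contra h
    rw [Set.not_nonempty_iff_eq_empty, Function.support_eq_empty_iff] at h
    have h0 : jtNorm le p (x n) ≤ 0 := by
      have h1 := jtNorm_le_segNorm_univ (le := le) hp (hblock.1 n)
      have h2 : segNorm (x n) Set.univ = 0 := by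
        rw [h]
        simp [segNorm]
      rw [h2] at h1
      exact h1
    rw [hnorm n] at h0
    linarith
  have hμmono : StrictMono (fun n => sInf (Function.support (x n))) :=
    strictMono_nat_of_lt_succ (fun n =>
      hblock.2 n _ _ (Nat.sInf_mem (hsne n)) (Nat.sInf_mem (hsne (n+1))))
  have hsupp_lb : ∀ n k, x n k ≠ 0 → n ≤ k := fun n k hk =>
    le_trans hμmono.le_apply (Nat.sInf_le hk)
  -- the union of pairwise intersections of the first m₀ branches
  set F := ⋃ (q : Fin m₀ × Fin m₀), (if q.1 ≠ q.2 then σ q.1 ∩ σ q.2 else ∅) with hFdef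
  have hFfin : F.Finite := by
    refine Set.finite_iUnion fun q => ?_
    by_cases h : q.1 ≠ q.2
    · rw [if_pos h]
      exact branches_inter_finite hT (hbr _) (hbr _)
        (hdist _ _ (fun hv => h (Fin.val_injective hv)))
    · rw [if_neg h]; exact Set.finite_empty
  set L := hFfin.toFinset.sup id with hLdef
  have hL : ∀ k ∈ F, k ≤ L := fun k hk => Finset.le_sup (f := id) (hFfin.mem_toFinset.2 hk)
  refine ⟨m₀, max n₁ (L + 1), fun n hn => ?_⟩
  have hxfin := hblock.1 n
  have hx_not_F : ∀ k, x n k ≠ 0 → ∀ i j, i < m₀ → j < m₀ → i ≠ j →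
      ¬(k ∈ σ i ∧ k ∈ σ j) := by
    rintro k hk i j hi hj hij ⟨h1, h2⟩
    have hkF : k ∈ F := by
      rw [hFdef]
      refine Set.mem_iUnion.2 ⟨(⟨i, hi⟩, ⟨j, hj⟩), ?_⟩
      rw [if_pos (by simpa using hij)]
      exact ⟨h1, h2⟩
    have hk1 := hL k hkF
    have hk2 := hsupp_lb n k hk
    have hk3 : L + 1 ≤ n := le_trans (le_max_right n₁ (L+1)) hn
    omega
  have hmain := main_bound hT hp hxfin (hnorm n) σ m₀ (fun i _ => hbr i)
    (fun i j _ _ h => hdist i j h) hx_not_F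
  -- lower bound on the branch mass
  have hterm : ∀ i ∈ Finset.range m₀, c i ^ p - η < segNorm (x n) (σ i) ^ p := by
    intro i hi
    have h1 := hn₁ n (le_trans (le_max_left n₁ (L+1)) hn) i hi
    have h2 : jtNorm le p ((σ i).indicator (x n)) ≤ segNorm (x n) (σ i) := by
      have hfin' : (Function.support ((σ i).indicator (x n))).Finite := by
        refine hxfin.subset ?_
        rw [Set.support_indicator]
        exact Set.inter_subset_right
      calc jtNorm le p ((σ i).indicator (x n))
          ≤ segNorm ((σ i).indicator (x n)) Set.univ := jtNorm_le_segNorm_univ hp hfin'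
        _ = segNorm (x n) (Set.univ ∩ σ i) := segNorm_indicator (x n) (σ i) Set.univ
        _ = segNorm (x n) (σ i) := by rw [Set.univ_inter]
    have hfin' : (Function.support ((σ i).indicator (x n))).Finite := by
      refine hxfin.subset ?_
      rw [Set.support_indicator]
      exact Set.inter_subset_right
    have h4 : jtNorm le p ((σ i).indicator (x n)) ^ p ≤ segNorm (x n) (σ i) ^ p :=
      Real.rpow_le_rpow (jtNorm_nonneg hp hfin') h2 (le_of_lt hp0)
    linarith
  have hSlow : 1 - ε ^ p < ∑ i ∈ Finset.range m₀, segNorm (x n) (σ i) ^ p := by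
    rcases Nat.eq_zero_or_pos m₀ with hm0 | hm0
    · subst hm0
      simp only [Finset.range_zero, Finset.sum_empty] at hm₀ ⊢
      linarith
    · have hlt : ∑ i ∈ Finset.range m₀, (c i ^ p - η)
          < ∑ i ∈ Finset.range m₀, segNorm (x n) (σ i) ^ p :=
        Finset.sum_lt_sum_of_nonempty (Finset.nonempty_range_iff.2 (Nat.pos_iff_ne_zero.1 hm0))
          hterm
      have hsum_sub : ∑ i ∈ Finset.range m₀, (c i ^ p - η)
          = (∑ i ∈ Finset.range m₀, c i ^ p) - m₀ * η := by
        rw [Finset.sum_sub_distrib, Finset.sum_const, Finset.card_range, nsmul_eq_mul]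
      have hmη : (m₀ : ℝ) * η ≤ ε ^ p / 2 := by
        rw [hηdef, mul_div_assoc']
        rw [div_le_div_iff₀ (by positivity) (by norm_num : (0:ℝ) < 2)]
        ring_nf
        nlinarith [hεp]
      linarith [hlt, hsum_sub, hm₀]
  -- conclude
  by_contra hcon
  push_neg at hcon
  have h5 : ε ^ p ≤ jtNorm le p ((⋃ i ∈ Finset.range m₀, σ i)ᶜ.indicator (x n)) ^ p :=
    Real.rpow_le_rpow (le_of_lt hε) hcon (le_of_lt hp0)
  linarith
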